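/- arXiv:1707.02066 — 2 statements merged into one kernel-verified Lean document; each statement's English description precedes it below -/
import Mathlib

section
/- Let (G, X) be a self-similar group action and let M = X* ⋈ G be the associated Zappa–Szép product. Then M is right cancellative (and hence cancellative) if and only if the map φ_u : G_u → G is injective for every u ∈ X*. -/
universe u v w

/-- A self-similar group action `(G, X)`: a group `G`, a set `X`, an action map
`G × X* → X*` and a restriction map `G × X* → G` satisfying (SS1)–(SS8). -/
structure SelfSimilarAction (G : Type u) [Group G] (X : Type v) where
  act : G → FreeMonoid X → FreeMonoid X
  res : G → FreeMonoid X → G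
  /-- (SS1) `1 · u = u` -/
  one_act : ∀ u : FreeMonoid X, act 1 u = u
  /-- (SS2) `(gh) · u = g · (h · u)` -/
  mul_act : ∀ (g h : G) (u : FreeMonoid X), act (g * h) u = act g (act h u)
  /-- (SS3) `g · 1 = 1` -/
  act_one : ∀ g : G, act g 1 = 1
  /-- (SS4) `g · (uv) = (g · u)((g|_u) · v)` -/
  act_mul : ∀ (g : G) (u v : FreeMonoid X), act g (u * v) = act g u * act (res g u) v
  /-- (SS5) `g|_1 = g` -/
  res_one : ∀ g : G, res g 1 = g
  /-- (SS6) `g|_{uv} = (g|_u)|_v` -/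
  res_mul : ∀ (g : G) (u v : FreeMonoid X), res g (u * v) = res (res g u) v
  /-- (SS7) `1|_u = 1` -/
  one_res : ∀ u : FreeMonoid X, res 1 u = 1
  /-- (SS8) `(gh)|_u = (g|_{h·u})(h|_u)` -/
  mul_res : ∀ (g h : G) (u : FreeMonoid X), res (g * h) u = res g (act h u) * res h u

namespace SelfSimilarAction

variable {G : Type u} [Group G] {X : Type v}

/-- The Zappa–Szép product `X* ⋈ G`: underlying set `X* × G`. -/
def ZS (A : SelfSimilarAction G X) : Type (max u v) := FreeMonoid X × G

/-- The element `(u, g)` of `X* ⋈ G`. -/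
def pair (A : SelfSimilarAction G X) (u : FreeMonoid X) (g : G) : A.ZS := (u, g)

/-- The Zappa–Szép product `X* ⋈ G` is a monoid with multiplication
`(u, g)(v, h) = (u (g·v), (g|_v) h)` and identity `(1, 1)`. -/
instance (A : SelfSimilarAction G X) : Monoid A.ZS where
  mul p q := ((p.1 * A.act p.2 q.1, A.res p.2 q.1 * q.2) : FreeMonoid X × G)
  one := (((1 : FreeMonoid X), (1 : G)) : FreeMonoid X × G)
  mul_assoc p q r := by
    show (((p.1 * A.act p.2 q.1) * A.act (A.res p.2 q.1 * q.2) r.1,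
        A.res (A.res p.2 q.1 * q.2) r.1 * r.2) : FreeMonoid X × G) =
      ((p.1 * A.act p.2 (q.1 * A.act q.2 r.1),
        A.res p.2 (q.1 * A.act q.2 r.1) * (A.res q.2 r.1 * r.2)) : FreeMonoid X × G)
    rw [A.mul_act, A.act_mul, A.mul_res, A.res_mul, mul_assoc, mul_assoc]
  one_mul p := by
    show (((1 : FreeMonoid X) * A.act 1 p.1, A.res 1 p.1 * p.2) : FreeMonoid X × G) = p
    rw [A.one_act, A.one_res, one_mul, one_mul]
    exact Prod.mk.eta
  mul_one p := by
    show ((p.1 * A.act p.2 1, A.res p.2 1 * 1) : FreeMonoid X × G) = p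
    rw [A.act_one, A.res_one, mul_one, mul_one]
    exact Prod.mk.eta

end SelfSimilarAction

/-!
The action of `G` on `X*` preserves word length: by (SS4) and injectivity of `g · -` it never
shortens a word, and applying `g⁻¹` gives the reverse inequality. Hence a right cancellation
`(u₁, g₁)(v, k) = (u₂, g₂)(v, k)` in `X* ⋈ G` forces `u₁ = u₂`, `g₁ · v = g₂ · v` and
`g₁|_v = g₂|_v`; then `g₂⁻¹ g₁` lies in `G_v` and has trivial restriction, which injectivity
of `φ_v` turns into `g₁ = g₂`. Conversely, for `g, h ∈ G_u` with `g|_u = h|_u` we get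
`(1, g)(u, 1) = (1, h)(u, 1)`. Left cancellation always holds, since each `g · -` is injective.
-/

theorem FreeMonoid.mul_eq_mul_of_length_eq {α : Type*} {a b c d : FreeMonoid α}
    (h : a * b = c * d) (hlen : b.length = d.length) : a = c ∧ b = d :=
  have h' := List.append_inj' (congrArg toList h) hlen
  ⟨toList.injective h'.1, toList.injective h'.2⟩

namespace SelfSimilarAction

variable {G : Type u} [Group G] {X : Type v} (A : SelfSimilarAction G X)

theorem act_inv_act (g : G) (w : FreeMonoid X) : A.act g⁻¹ (A.act g w) = w := by
  rw [← A.mul_act, inv_mul_cancel, A.one_act]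

theorem act_injective (g : G) : Function.Injective (A.act g) :=
  Function.LeftInverse.injective (A.act_inv_act g)

theorem act_ne_one {g : G} {w : FreeMonoid X} (hw : w ≠ 1) : A.act g w ≠ 1 := by
  rw [← A.act_one g]
  exact (A.act_injective g).ne hw

theorem length_le_length_act (g : G) (w : FreeMonoid X) : w.length ≤ (A.act g w).length := by
  induction w using FreeMonoid.recOn generalizing g with
  | one => exact Nat.zero_le _
  | of_mul x w ih =>
    have hx : (A.act g (.of x)).length ≠ 0 :=
      FreeMonoid.length_eq_zero.not.mpr (A.act_ne_one (FreeMonoid.of_ne_one x))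
    rw [A.act_mul, FreeMonoid.length_mul, FreeMonoid.length_mul, FreeMonoid.length_of]
    have := ih (A.res g (.of x))
    omega

theorem length_act (g : G) (w : FreeMonoid X) : (A.act g w).length = w.length :=
  le_antisymm
    (by simpa only [A.act_inv_act] using A.length_le_length_act g⁻¹ (A.act g w))
    (A.length_le_length_act g w)

theorem pair_mul_pair (u₁ u₂ : FreeMonoid X) (g₁ g₂ : G) :
    A.pair u₁ g₁ * A.pair u₂ g₂ = A.pair (u₁ * A.act g₁ u₂) (A.res g₁ u₂ * g₂) :=
  rfl

theorem pair_injective {u₁ u₂ : FreeMonoid X} {g₁ g₂ : G} (h : A.pair u₁ g₁ = A.pair u₂ g₂) :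
    u₁ = u₂ ∧ g₁ = g₂ :=
  Prod.mk.inj h

theorem exists_eq_pair (p : A.ZS) : ∃ u g, p = A.pair u g :=
  ⟨p.1, p.2, rfl⟩

instance : IsLeftCancelMul A.ZS where
  mul_left_cancel a b c (h : a * b = a * c) := by
    obtain ⟨u, g, rfl⟩ := A.exists_eq_pair a
    obtain ⟨v₁, h₁, rfl⟩ := A.exists_eq_pair b
    obtain ⟨v₂, h₂, rfl⟩ := A.exists_eq_pair c
    rw [pair_mul_pair, pair_mul_pair] at h
    obtain ⟨hv, hh⟩ := A.pair_injective h
    obtain rfl : v₁ = v₂ := A.act_injective g (mul_left_cancel hv)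
    rw [mul_left_cancel hh]

theorem res_injective_of_isRightCancel (hM : ∀ a b c : A.ZS, b * a = c * a → b = c)
    (w : FreeMonoid X) (g h : G) (hg : A.act g w = w) (hh : A.act h w = w)
    (hres : A.res g w = A.res h w) : g = h := by
  have : A.pair 1 g * A.pair w 1 = A.pair 1 h * A.pair w 1 := by
    rw [pair_mul_pair, pair_mul_pair, hg, hh, hres]
  exact (A.pair_injective (hM _ _ _ this)).2

theorem isRightCancel_of_res_injective
    (hφ : ∀ (w : FreeMonoid X) (g h : G), A.act g w = w → A.act h w = w →
      A.res g w = A.res h w → g = h)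
    (a b c : A.ZS) (hbc : b * a = c * a) : b = c := by
  obtain ⟨v, k, rfl⟩ := A.exists_eq_pair a
  obtain ⟨u₁, g₁, rfl⟩ := A.exists_eq_pair b
  obtain ⟨u₂, g₂, rfl⟩ := A.exists_eq_pair c
  rw [pair_mul_pair, pair_mul_pair] at hbc
  obtain ⟨hword, hgrp⟩ := A.pair_injective hbc
  have hres : A.res g₁ v = A.res g₂ v := mul_right_cancel hgrp
  obtain ⟨rfl, hact⟩ := FreeMonoid.mul_eq_mul_of_length_eq hword
    (by rw [A.length_act, A.length_act])
  have hfix : A.act (g₂⁻¹ * g₁) v = v := by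
    rw [A.mul_act, hact, A.act_inv_act]
  have hres_one : A.res (g₂⁻¹ * g₁) v = A.res 1 v := by
    rw [A.mul_res, hact, hres, ← A.mul_res, inv_mul_cancel]
  have : g₂⁻¹ * g₁ = 1 := hφ v _ _ hfix (A.one_act v) hres_one
  rw [inv_mul_eq_one.mp this]

end SelfSimilarAction

/-- `M = X* ⋈ G` is right cancellative iff `φ_u : G_u → G` is injective for
every `u ∈ X*`; moreover right cancellativity implies full cancellativity. -/
theorem stmt6 (G : Type u) [Group G] (X : Type v) (A : SelfSimilarAction G X) :
    ((∀ a b c : A.ZS, b * a = c * a → b = c) ↔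
      ∀ (u : FreeMonoid X) (g h : G), A.act g u = u → A.act h u = u →
        A.res g u = A.res h u → g = h) ∧
    ((∀ a b c : A.ZS, b * a = c * a → b = c) →
      ∀ a b c : A.ZS, a * b = a * c → b = c) :=
  ⟨⟨A.res_injective_of_isRightCancel, A.isRightCancel_of_res_injective⟩,
    fun _ _ _ _ => mul_left_cancel⟩
end

section
/- Let M be a left Rees monoid. Then M is isomorphic to a monoid HNN-extension of a group: there exist a group G, a set I, subgroups H_i ≤ G and group homomorphisms ρ_i : H_i → G (i ∈ I) such that M is isomorphic as a monoid to ⟨G, t_i (i ∈ I) | relations of G, h t_i = t_i ρ_i(h) for all h ∈ H_i⟩. -/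
universe u v

/-- The principal right ideal `aM` of a monoid. -/
def prIdeal {M : Type*} [Monoid M] (a : M) : Set M := Set.range fun m => a * m

/-- A left Rees monoid: a left cancellative, right rigid monoid in which every principal
right ideal is contained in only finitely many distinct principal right ideals. -/
def IsLeftReesMonoid (M : Type*) [Monoid M] : Prop :=
  (∀ a b c : M, a * b = a * c → b = c) ∧
  (∀ a b : M, (prIdeal a ∩ prIdeal b).Nonempty →
    prIdeal a ⊆ prIdeal b ∨ prIdeal b ⊆ prIdeal a) ∧
  (∀ a : M, {S : Set M | (∃ b : M, S = prIdeal b) ∧ prIdeal a ⊆ S}.Finite)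

/-- The defining relations of the monoid HNN-extension
`⟨G, tᵢ (i ∈ I) | relations of G, h tᵢ = tᵢ ρᵢ(h) for h ∈ Hᵢ⟩`. -/
inductive HNNRel (G : Type u) [Group G] {I : Type v} (H : I → Subgroup G)
    (ρ : ∀ i, H i →* G) : FreeMonoid (G ⊕ I) → FreeMonoid (G ⊕ I) → Prop
  | mul (g h : G) : HNNRel G H ρ
      (FreeMonoid.of (Sum.inl g) * FreeMonoid.of (Sum.inl h))
      (FreeMonoid.of (Sum.inl (g * h)))
  | one : HNNRel G H ρ (FreeMonoid.of (Sum.inl (1 : G))) 1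
  | hnn (i : I) (h : H i) : HNNRel G H ρ
      (FreeMonoid.of (Sum.inl (h : G)) * FreeMonoid.of (Sum.inr i))
      (FreeMonoid.of (Sum.inr i) * FreeMonoid.of (Sum.inl (ρ i h)))

/-- The monoid HNN-extension of `G` with associated subgroups `Hᵢ`, homomorphisms `ρᵢ`
and stable letters `tᵢ`. -/
abbrev HNNMonoid (G : Type u) [Group G] {I : Type v} (H : I → Subgroup G)
    (ρ : ∀ i, H i →* G) :=
  (conGen (HNNRel G H ρ)).Quotient

/-!
The length `λ(a) = #{bM ⊇ aM} - 1` is additive, because right rigidity makes the principal right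
ideals above `ab` those above `a` together with the `a`-translates of those above `b`; it vanishes
exactly on units, so every non-unit has a left factor of length one (an atom). Choose a
representative `xᵢ` of each class of atoms under `x ~ g x u` (`g`, `u` units), and let `Hᵢ` be the
units `g` with `g xᵢ = xᵢ ρᵢ(g)` for a (unique, by cancellation) unit `ρᵢ(g)`. Sending `G = Mˣ`
to itself and `tᵢ` to `xᵢ` defines a surjection from the HNN-extension onto `M`. It is injective
by induction on length: if `g xᵢ a = g' xⱼ b`, right rigidity forces `g xᵢ M = g' xⱼ M`, hence
`i = j`, `g'⁻¹ g ∈ Hᵢ`, and the relation `h tᵢ = tᵢ ρᵢ(h)` moves `g'⁻¹ g` past `tᵢ`.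
-/

namespace HNNMonoid

variable {G : Type u} [Group G] {I : Type v} {H : I → Subgroup G} {ρ : ∀ i, H i →* G}

def of : G →* HNNMonoid G H ρ where
  toFun g := (conGen (HNNRel G H ρ)).mk' (.of (.inl g))
  map_one' := (Con.eq _).2 (ConGen.Rel.of _ _ .one)
  map_mul' g h := ((Con.eq _).2 (ConGen.Rel.of _ _ (.mul g h))).symm

def t (i : I) : HNNMonoid G H ρ := (conGen (HNNRel G H ρ)).mk' (.of (.inr i))

theorem of_mul_t (i : I) (h : H i) : (of (h : G) * t i : HNNMonoid G H ρ) = t i * of (ρ i h) :=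
  (Con.eq _).2 (ConGen.Rel.of _ _ (.hnn i h))

def lift {N : Type*} [Monoid N] (f : G →* N) (x : I → N)
    (hx : ∀ i (h : H i), f h * x i = x i * f (ρ i h)) : HNNMonoid G H ρ →* N :=
  Con.lift _ (FreeMonoid.lift (Sum.elim f x)) <| Con.conGen_le.2 fun _ _ r ↦ by
    cases r <;> simp [hx]

section lift

variable {N : Type*} [Monoid N] (f : G →* N) (x : I → N)
  (hx : ∀ i (h : H i), f h * x i = x i * f (ρ i h))

@[simp] theorem lift_of (g : G) : lift f x hx (of g) = f g := by
  simp [lift, of]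

@[simp] theorem lift_t (i : I) : lift f x hx (t i) = x i := by
  simp [lift, t]

end lift

theorem eq_of_or_eq_of_mul_t_mul (q : HNNMonoid G H ρ) :
    (∃ g : G, q = of g) ∨ ∃ (g : G) (i : I) (q' : HNNMonoid G H ρ), q = of g * t i * q' := by
  refine Con.induction_on (c := conGen (HNNRel G H ρ)) q fun w ↦ ?_
  induction w using FreeMonoid.recOn with
  | one => exact .inl ⟨1, by simp⟩
  | of_mul a w ih =>
    rw [Con.coe_mul]
    rcases a with g | i
    · rcases ih with ⟨h, hw⟩ | ⟨h, i, q', hw⟩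
      · exact .inl ⟨g * h, by rw [hw, map_mul]; rfl⟩
      · exact .inr ⟨g * h, i, q', by rw [hw, map_mul, ← mul_assoc, ← mul_assoc]; rfl⟩
    · exact .inr ⟨1, i, w, by rw [map_one, one_mul]; rfl⟩

end HNNMonoid

section PrincipalRightIdeals

variable {M : Type*} [Monoid M]

theorem mem_prIdeal_self (a : M) : a ∈ prIdeal a := ⟨1, mul_one a⟩

theorem prIdeal_subset_prIdeal_iff {a b : M} : prIdeal a ⊆ prIdeal b ↔ ∃ c, a = b * c := by
  refine ⟨fun h ↦ ?_, ?_⟩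
  · obtain ⟨c, hc⟩ := h (mem_prIdeal_self a)
    exact ⟨c, hc.symm⟩
  · rintro ⟨c, rfl⟩ _ ⟨m, rfl⟩
    exact ⟨c * m, (mul_assoc ..).symm⟩

theorem prIdeal_one : prIdeal (1 : M) = Set.univ :=
  Set.eq_univ_of_forall fun x ↦ ⟨x, one_mul x⟩

theorem prIdeal_mul_units (a : M) (u : Mˣ) : prIdeal (a * u) = prIdeal a := by
  refine (prIdeal_subset_prIdeal_iff.2 ⟨(u : M), rfl⟩).antisymm
    (prIdeal_subset_prIdeal_iff.2 ⟨(↑u⁻¹ : M), ?_⟩)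
  rw [mul_assoc, Units.mul_inv, mul_one]

theorem IsUnit.prIdeal_eq_univ {a : M} (h : IsUnit a) : prIdeal a = Set.univ := by
  obtain ⟨u, rfl⟩ := h
  simpa [prIdeal_one] using prIdeal_mul_units (1 : M) u

theorem image_mul_left_prIdeal (a d : M) : (a * ·) '' prIdeal d = prIdeal (a * d) := by
  simp only [prIdeal, ← Set.range_comp, Function.comp_def, mul_assoc]

def prIdealsAbove (a : M) : Set (Set M) := {S | (∃ b, S = prIdeal b) ∧ prIdeal a ⊆ S}

theorem prIdeal_mem_prIdealsAbove (a : M) : prIdeal a ∈ prIdealsAbove a := ⟨⟨a, rfl⟩, subset_rfl⟩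

theorem univ_mem_prIdealsAbove (a : M) : Set.univ ∈ prIdealsAbove a :=
  ⟨⟨1, prIdeal_one.symm⟩, Set.subset_univ _⟩

theorem prIdealsAbove_inter_image (a b : M) :
    prIdealsAbove a ∩ Set.image (a * ·) '' prIdealsAbove b = {prIdeal a} := by
  refine Set.eq_singleton_iff_unique_mem.2 ⟨⟨prIdeal_mem_prIdealsAbove a, ?_⟩, ?_⟩
  · exact ⟨prIdeal 1, ⟨⟨1, rfl⟩, by simp [prIdeal_one]⟩, by rw [image_mul_left_prIdeal, mul_one]⟩
  · rintro _ ⟨⟨_, hsub⟩, _, ⟨⟨d, rfl⟩, _⟩, rfl⟩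
    rw [image_mul_left_prIdeal] at hsub ⊢
    exact (prIdeal_subset_prIdeal_iff.2 ⟨d, rfl⟩).antisymm hsub

noncomputable def reesLength (a : M) : ℕ := (prIdealsAbove a).ncard - 1

end PrincipalRightIdeals

namespace IsLeftReesMonoid

variable {M : Type*} [Monoid M]

theorem mul_left_cancel (hM : IsLeftReesMonoid M) {a b c : M} (h : a * b = a * c) : b = c :=
  hM.1 a b c h

theorem prIdeal_subset_or_subset (hM : IsLeftReesMonoid M) {a b : M}
    (h : (prIdeal a ∩ prIdeal b).Nonempty) : prIdeal a ⊆ prIdeal b ∨ prIdeal b ⊆ prIdeal a :=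
  hM.2.1 a b h

theorem isLeftCancelMul (hM : IsLeftReesMonoid M) : IsLeftCancelMul M :=
  ⟨fun _ _ _ ↦ hM.mul_left_cancel⟩

theorem isUnit_of_prIdeal_eq_univ (hM : IsLeftReesMonoid M) {a : M}
    (h : prIdeal a = Set.univ) : IsUnit a := by
  obtain ⟨b, hab : a * b = 1⟩ : (1 : M) ∈ prIdeal a := h ▸ Set.mem_univ 1
  have hba : b * a = 1 := hM.mul_left_cancel (a := a) (by rw [← mul_assoc, hab, one_mul, mul_one])
  exact ⟨⟨a, b, hab, hba⟩, rfl⟩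

theorem exists_units_of_prIdeal_eq (hM : IsLeftReesMonoid M) {a b : M}
    (h : prIdeal a = prIdeal b) : ∃ u : Mˣ, a = b * u := by
  obtain ⟨c, hc⟩ := prIdeal_subset_prIdeal_iff.1 h.le
  obtain ⟨d, hd⟩ := prIdeal_subset_prIdeal_iff.1 h.ge
  have hcd : c * d = 1 := hM.mul_left_cancel (a := b) (by rw [← mul_assoc, ← hc, ← hd, mul_one])
  have hdc : d * c = 1 := hM.mul_left_cancel (a := a) (by rw [← mul_assoc, ← hd, ← hc, mul_one])
  exact ⟨⟨c, d, hcd, hdc⟩, hc⟩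

theorem finite_prIdealsAbove (hM : IsLeftReesMonoid M) (a : M) : (prIdealsAbove a).Finite :=
  hM.2.2 a

theorem ncard_prIdealsAbove (hM : IsLeftReesMonoid M) (a : M) :
    (prIdealsAbove a).ncard = reesLength a + 1 := by
  have := (Set.ncard_pos (hM.finite_prIdealsAbove a)).2 ⟨_, prIdeal_mem_prIdealsAbove a⟩
  unfold reesLength
  omega

theorem prIdealsAbove_mul (hM : IsLeftReesMonoid M) (a b : M) :
    prIdealsAbove (a * b) = prIdealsAbove a ∪ Set.image (a * ·) '' prIdealsAbove b := by
  ext S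
  constructor
  · rintro ⟨⟨c, rfl⟩, hsub⟩
    have hab : a * b ∈ prIdeal c := hsub (mem_prIdeal_self _)
    rcases hM.prIdeal_subset_or_subset ⟨a * b, ⟨b, rfl⟩, hab⟩ with h | h
    · exact .inl ⟨⟨c, rfl⟩, h⟩
    · obtain ⟨d, rfl⟩ := prIdeal_subset_prIdeal_iff.1 h
      obtain ⟨m, hm⟩ := hab
      refine .inr ⟨prIdeal d, ⟨⟨d, rfl⟩, ?_⟩, image_mul_left_prIdeal a d⟩
      exact prIdeal_subset_prIdeal_iff.2
        ⟨m, hM.mul_left_cancel (by rw [← mul_assoc]; exact hm.symm)⟩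
  · rintro (⟨⟨c, rfl⟩, hsub⟩ | ⟨_, ⟨⟨d, rfl⟩, hsub⟩, rfl⟩)
    · exact ⟨⟨c, rfl⟩, (prIdeal_subset_prIdeal_iff.2 ⟨b, rfl⟩).trans hsub⟩
    · obtain ⟨m, rfl⟩ := prIdeal_subset_prIdeal_iff.1 hsub
      rw [image_mul_left_prIdeal]
      exact ⟨⟨a * d, rfl⟩, prIdeal_subset_prIdeal_iff.2 ⟨m, (mul_assoc ..).symm⟩⟩

theorem reesLength_mul (hM : IsLeftReesMonoid M) (a b : M) :
    reesLength (a * b) = reesLength a + reesLength b := by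
  have hinj : Function.Injective (Set.image (a * ·) : Set M → Set M) :=
    Set.image_injective.2 fun _ _ ↦ hM.mul_left_cancel
  have key := Set.ncard_union_add_ncard_inter (prIdealsAbove a)
    (Set.image (a * ·) '' prIdealsAbove b) (hM.finite_prIdealsAbove a) ((hM.finite_prIdealsAbove b).image _)
  rw [← hM.prIdealsAbove_mul, prIdealsAbove_inter_image, Set.ncard_singleton,
    Set.ncard_image_of_injective _ hinj, hM.ncard_prIdealsAbove, hM.ncard_prIdealsAbove,
    hM.ncard_prIdealsAbove] at key
  omega

theorem reesLength_eq_zero_iff (hM : IsLeftReesMonoid M) {a : M} :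
    reesLength a = 0 ↔ IsUnit a := by
  refine ⟨fun h ↦ hM.isUnit_of_prIdeal_eq_univ ?_, fun h ↦ ?_⟩
  · have hle : (prIdealsAbove a).ncard ≤ 1 := by rw [hM.ncard_prIdealsAbove, h]
    exact (Set.ncard_le_one (hM.finite_prIdealsAbove a)).1 hle _ (prIdeal_mem_prIdealsAbove a) _
      (univ_mem_prIdealsAbove a)
  · have : prIdealsAbove a = {Set.univ} := Set.eq_singleton_iff_unique_mem.2
      ⟨univ_mem_prIdealsAbove a, fun _ hS ↦ Set.univ_subset_iff.1 (h.prIdeal_eq_univ ▸ hS.2)⟩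
    simp [reesLength, this]

theorem reesLength_units_mul (hM : IsLeftReesMonoid M) (g : Mˣ) (a : M) :
    reesLength (g * a) = reesLength a := by
  rw [hM.reesLength_mul, hM.reesLength_eq_zero_iff.2 g.isUnit, zero_add]

theorem exists_nonunit_mul_nonunit (hM : IsLeftReesMonoid M) {a : M} (ha : 2 ≤ reesLength a) :
    ∃ c d, a = c * d ∧ ¬IsUnit c ∧ ¬IsUnit d := by
  have hcard : 2 < (prIdealsAbove a).ncard := by rw [hM.ncard_prIdealsAbove]; omega
  obtain ⟨S, hS, hS'⟩ : ∃ S ∈ prIdealsAbove a, S ∉ ({prIdeal a, Set.univ} : Set (Set M)) := by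
    by_contra! h
    have := Set.ncard_le_ncard h (Set.toFinite _)
    have := Set.ncard_insert_le (prIdeal a) {(Set.univ : Set M)}
    simp only [Set.ncard_singleton] at this
    omega
  simp only [Set.mem_insert_iff, Set.mem_singleton_iff, not_or] at hS'
  obtain ⟨⟨c, rfl⟩, hsub⟩ := hS
  obtain ⟨d, rfl⟩ := prIdeal_subset_prIdeal_iff.1 hsub
  refine ⟨c, d, rfl, fun hc ↦ hS'.2 hc.prIdeal_eq_univ, ?_⟩
  rintro ⟨u, rfl⟩
  exact hS'.1 (prIdeal_mul_units c u).symm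

theorem exists_reesLength_eq_one_mul (hM : IsLeftReesMonoid M) {a : M} (ha : reesLength a ≠ 0) :
    ∃ x b, reesLength x = 1 ∧ a = x * b := by
  induction hn : reesLength a using Nat.strong_induction_on generalizing a with | _ n ih
  subst hn
  by_cases h1 : reesLength a = 1
  · exact ⟨a, 1, h1, (mul_one a).symm⟩
  obtain ⟨c, d, rfl, hc, hd⟩ := hM.exists_nonunit_mul_nonunit (a := a) (by omega)
  rw [← hM.reesLength_eq_zero_iff] at hc hd
  obtain ⟨x, b, hx, rfl⟩ := ih _ (by rw [hM.reesLength_mul]; omega) hc rfl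
  exact ⟨x, b * d, hx, mul_assoc ..⟩

theorem exists_units_of_mul_eq_mul (hM : IsLeftReesMonoid M) {x y a b : M}
    (hx : reesLength x = 1) (hy : reesLength y = 1) (h : x * a = y * b) :
    ∃ v : Mˣ, x = y * v ∧ v * a = b := by
  suffices hxy : prIdeal x = prIdeal y by
    obtain ⟨v, rfl⟩ := hM.exists_units_of_prIdeal_eq hxy
    exact ⟨v, rfl, hM.mul_left_cancel (by rw [← mul_assoc, h])⟩
  have atom_le {x y : M} (hx : reesLength x = 1) (hy : reesLength y = 1)
      (hle : prIdeal x ⊆ prIdeal y) : prIdeal x = prIdeal y := by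
    obtain ⟨c, rfl⟩ := prIdeal_subset_prIdeal_iff.1 hle
    rw [hM.reesLength_mul, hy] at hx
    obtain ⟨u, rfl⟩ := (hM.reesLength_eq_zero_iff (a := c)).1 (by omega)
    exact prIdeal_mul_units y u
  rcases hM.prIdeal_subset_or_subset ⟨x * a, ⟨a, rfl⟩, ⟨b, h.symm⟩⟩ with hle | hle
  · exact atom_le hx hy hle
  · exact (atom_le hy hx hle).symm

end IsLeftReesMonoid

section AtomClass

variable {M : Type*} [Monoid M]

variable (M) in
def atomSetoid : Setoid {x : M // reesLength x = 1} where
  r x y := ∃ g u : Mˣ, (y : M) = g * x * u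
  iseqv.refl _ := ⟨1, 1, by simp⟩
  iseqv.symm := by
    rintro x y ⟨g, u, h⟩
    exact ⟨g⁻¹, u⁻¹, by simp [h, mul_assoc]⟩
  iseqv.trans := by
    rintro x y z ⟨g, u, h⟩ ⟨g', u', h'⟩
    exact ⟨g' * g, u * u', by simp [h, h', mul_assoc]⟩

variable (M) in
def AtomClass : Type _ := Quotient (atomSetoid M)

noncomputable def AtomClass.rep (i : AtomClass M) : M := (Quotient.out i).1

theorem AtomClass.reesLength_rep (i : AtomClass M) : reesLength i.rep = 1 := (Quotient.out i).2

theorem AtomClass.exists_eq_units_mul_rep_mul {x : M} (hx : reesLength x = 1) :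
    ∃ (i : AtomClass M) (g u : Mˣ), x = g * i.rep * u :=
  ⟨Quotient.mk _ ⟨x, hx⟩, Quotient.mk_out (s := atomSetoid M) ⟨x, hx⟩⟩

theorem AtomClass.eq_of_rep_eq_units_mul_mul {i j : AtomClass M} (g u : Mˣ)
    (h : j.rep = g * i.rep * u) : i = j := by
  rw [← Quotient.out_eq i, ← Quotient.out_eq j]
  exact Quotient.sound ⟨g, u, h⟩

end AtomClass

section UnitsStab

variable {M : Type*} [Monoid M]

def unitsStab (x : M) : Subgroup Mˣ where
  carrier := {g | ∃ u : Mˣ, (g : M) * x = x * u}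
  one_mem' := ⟨1, by simp⟩
  mul_mem' := by
    rintro g g' ⟨u, hu⟩ ⟨u', hu'⟩
    exact ⟨u * u', by simp only [Units.val_mul, mul_assoc, hu']; rw [← mul_assoc, hu, mul_assoc]⟩
  inv_mem' := by
    rintro g ⟨u, hu⟩
    refine ⟨u⁻¹, ?_⟩
    rw [Units.eq_mul_inv_iff_mul_eq, mul_assoc, ← hu, Units.inv_mul_cancel_left]

theorem mem_unitsStab {x : M} {g : Mˣ} : g ∈ unitsStab x ↔ ∃ u : Mˣ, (g : M) * x = x * u :=
  Iff.rfl

variable [IsLeftCancelMul M]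

noncomputable def unitsStabHom (x : M) : unitsStab x →* Mˣ where
  toFun g := Classical.choose g.2
  map_one' := Units.ext <| mul_left_cancel (a := x) <| by
    rw [← Classical.choose_spec (1 : unitsStab x).2]
    simp
  map_mul' g g' := Units.ext <| mul_left_cancel (a := x) <| by
    rw [← Classical.choose_spec (g * g').2, Units.val_mul, ← mul_assoc,
      ← Classical.choose_spec g.2, mul_assoc, ← Classical.choose_spec g'.2, ← mul_assoc]
    rfl

theorem units_mul_eq_mul_unitsStabHom (x : M) (g : unitsStab x) :
    ((g : Mˣ) : M) * x = x * unitsStabHom x g :=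
  Classical.choose_spec g.2

theorem unitsStabHom_eq_of_mul_eq {x : M} {g : unitsStab x} {u : Mˣ}
    (h : ((g : Mˣ) : M) * x = x * u) : unitsStabHom x g = u :=
  Units.ext <| mul_left_cancel (a := x) <| by rw [← units_mul_eq_mul_unitsStabHom, h]

end UnitsStab

abbrev ReesHNN (M : Type*) [Monoid M] [IsLeftCancelMul M] : Type _ :=
  HNNMonoid Mˣ (fun i : AtomClass M ↦ unitsStab i.rep) (fun i ↦ unitsStabHom i.rep)

namespace ReesHNN

open HNNMonoid

variable {M : Type*} [Monoid M] [IsLeftCancelMul M]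

noncomputable def eval : ReesHNN M →* M :=
  lift (Units.coeHom M) AtomClass.rep fun i ↦ units_mul_eq_mul_unitsStabHom i.rep

@[simp] theorem eval_of (g : Mˣ) : eval (of g : ReesHNN M) = g := lift_of ..

@[simp] theorem eval_t (i : AtomClass M) : eval (t i : ReesHNN M) = i.rep := lift_t ..

theorem reesLength_eval_of (hM : IsLeftReesMonoid M) (g : Mˣ) :
    reesLength (eval (of g : ReesHNN M)) = 0 := by
  rw [eval_of, hM.reesLength_eq_zero_iff]
  exact g.isUnit

theorem reesLength_eval_of_mul_t_mul (hM : IsLeftReesMonoid M) (g : Mˣ) (i : AtomClass M)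
    (q : ReesHNN M) : reesLength (eval (of g * t i * q)) = reesLength (eval q) + 1 := by
  rw [map_mul, map_mul, eval_of, eval_t, mul_assoc, hM.reesLength_units_mul, hM.reesLength_mul,
    AtomClass.reesLength_rep, add_comm]

theorem eval_surjective (hM : IsLeftReesMonoid M) : Function.Surjective (eval : ReesHNN M → M) := by
  intro a
  induction hn : reesLength a using Nat.strong_induction_on generalizing a with | _ n ih
  subst hn
  by_cases ha : reesLength a = 0
  · obtain ⟨g, rfl⟩ := hM.reesLength_eq_zero_iff.1 ha
    exact ⟨of g, eval_of g⟩
  obtain ⟨x, b, hx, rfl⟩ := hM.exists_reesLength_eq_one_mul ha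
  obtain ⟨i, g, u, hgu⟩ := AtomClass.exists_eq_units_mul_rep_mul hx
  obtain ⟨q, hq⟩ := ih (reesLength (u * b))
    (by rw [hM.reesLength_mul x, hM.reesLength_units_mul]; omega) (u * b) rfl
  exact ⟨of g * t i * q, by simp [hq, hgu, mul_assoc]⟩

theorem exists_units_of_eval_of_mul_t_mul_eq (hM : IsLeftReesMonoid M) {g g' : Mˣ}
    {i i' : AtomClass M} {q q' : ReesHNN M} (h : eval (of g * t i * q) = eval (of g' * t i' * q')) :
    ∃ v : Mˣ, of g * t i * q = of g' * t i' * (of v * q) ∧ eval (of v * q) = eval q' := by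
  simp only [map_mul, eval_of, eval_t] at h
  obtain ⟨v, hv, hvq⟩ := hM.exists_units_of_mul_eq_mul
    (by rw [hM.reesLength_units_mul, AtomClass.reesLength_rep])
    (by rw [hM.reesLength_units_mul, AtomClass.reesLength_rep]) h
  have hk : ((g'⁻¹ * g : Mˣ) : M) * i.rep = i'.rep * v := by
    rw [Units.val_mul, mul_assoc, hv, mul_assoc (g' : M), Units.inv_mul_cancel_left]
  obtain rfl : i = i' := AtomClass.eq_of_rep_eq_units_mul_mul (g'⁻¹ * g) v⁻¹ <| by
    rw [hk, Units.mul_inv_cancel_right]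
  refine ⟨v, ?_, by simpa using hvq⟩
  have hmem : g'⁻¹ * g ∈ unitsStab i.rep := mem_unitsStab.2 ⟨v, hk⟩
  have hρ : unitsStabHom i.rep ⟨g'⁻¹ * g, hmem⟩ = v := unitsStabHom_eq_of_mul_eq hk
  calc of g * t i * q = of g' * (of (g'⁻¹ * g) * t i) * q := by
        rw [← mul_assoc, ← map_mul, mul_inv_cancel_left]
    _ = of g' * t i * (of v * q) := by
        rw [← hρ, of_mul_t i ⟨g'⁻¹ * g, hmem⟩]
        simp only [mul_assoc]

theorem eval_injective (hM : IsLeftReesMonoid M) : Function.Injective (eval : ReesHNN M → M) := by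
  intro q q' h
  induction hn : reesLength (eval q) using Nat.strong_induction_on generalizing q q' with | _ n ih
  subst hn
  have hlen := congrArg reesLength h
  rcases eq_of_or_eq_of_mul_t_mul q with ⟨g, rfl⟩ | ⟨g, i, q₁, rfl⟩ <;>
    rcases eq_of_or_eq_of_mul_t_mul q' with ⟨g', rfl⟩ | ⟨g', i', q₁', rfl⟩
  · obtain rfl : g = g' := Units.ext (by simpa using h)
    rfl
  · rw [reesLength_eval_of hM, reesLength_eval_of_mul_t_mul hM] at hlen
    omega
  · rw [reesLength_eval_of hM, reesLength_eval_of_mul_t_mul hM] at hlen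
    omega
  · obtain ⟨v, hq, hv⟩ := exists_units_of_eval_of_mul_t_mul_eq hM h
    rw [hq, ih _ (by rw [reesLength_eval_of_mul_t_mul hM, map_mul, eval_of,
      hM.reesLength_units_mul]; omega) hv rfl]

end ReesHNN

/-- every left Rees monoid is isomorphic to a monoid HNN-extension of a
group. -/
theorem stmt8 (M : Type u) [Monoid M] (hM : IsLeftReesMonoid M) :
    ∃ (G : Type u) (_ : Group G) (I : Type u) (H : I → Subgroup G) (ρ : ∀ i, H i →* G),
      Nonempty (M ≃* HNNMonoid G H ρ) := by
  have := hM.isLeftCancelMul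
  have hbij : Function.Bijective (ReesHNN.eval : ReesHNN M → M) :=
    ⟨ReesHNN.eval_injective hM, ReesHNN.eval_surjective hM⟩
  exact ⟨Mˣ, inferInstance, AtomClass M, _, _, ⟨(MulEquiv.ofBijective _ hbij).symm⟩⟩
end
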